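/- arXiv:2408.06619 — 3 statements merged into one kernel-verified Lean document; each statement's English description precedes it below -/
import Mathlib

section
/- Let (R, m) be a commutative local ring with residue field k = R/m, and let C be a bounded chain complex of finitely generated free R-modules. If the homology of C ⊗_R k is nonzero in some degree, then the homology of C is nonzero in some degree. -/
/-- Let `(R, m)` be a commutative local ring with residue field `k`, and let `C` be a bounded
chain complex of finitely generated free `R`-modules, presented by a rank function `r : ℤ → ℕ`
and differentials given by matrices `d n : R^{r (n+1)} → R^{r n}` with `d n ∘ d (n+1) = 0`.
If the homology of `C ⊗_R k` is nonzero in some degree (there is a mod-`m` cycle which is not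
a mod-`m` boundary), then the homology of `C` is nonzero in some degree. -/
theorem stmt_2 (R : Type) [CommRing R] [IsLocalRing R]
    (r : ℤ → ℕ) (d : ∀ n : ℤ, Matrix (Fin (r n)) (Fin (r (n + 1))) R)
    (hbdd : ∃ N : ℤ, ∀ n : ℤ, N < |n| → r n = 0)
    (hd : ∀ n : ℤ, d n * d (n + 1) = 0)
    (h : ∃ (n : ℤ) (v : Fin (r (n + 1)) → R ⧸ IsLocalRing.maximalIdeal R),
        ((d n).map (Ideal.Quotient.mk (IsLocalRing.maximalIdeal R))).mulVec v = 0 ∧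
        ∀ w : Fin (r (n + 1 + 1)) → R ⧸ IsLocalRing.maximalIdeal R,
          ((d (n + 1)).map (Ideal.Quotient.mk (IsLocalRing.maximalIdeal R))).mulVec w ≠ v) :
    ∃ (n : ℤ) (v : Fin (r (n + 1)) → R),
        (d n).mulVec v = 0 ∧ ∀ w : Fin (r (n + 1 + 1)) → R, (d (n + 1)).mulVec w ≠ v := by
  by_contra hcon
  push_neg at hcon
  -- hcon : ∀ n v, d n.mulVec v = 0 → ∃ w, (d (n+1)).mulVec w = v
  obtain ⟨n, v, hv, hnb⟩ := h
  obtain ⟨N, hN⟩ := hbdd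
  set π := Ideal.Quotient.mk (IsLocalRing.maximalIdeal R) with hπ
  -- Build a partial contracting homotopy by induction up the complex.
  have key : ∀ m : ℤ, min n (-N - 1) - 1 ≤ m →
      ∃ (g : Matrix (Fin (r (m + 1))) (Fin (r m)) R)
        (g' : Matrix (Fin (r (m + 1 + 1))) (Fin (r (m + 1))) R),
        d (m + 1) * g' + g * d m = 1 := by
    refine Int.le_induction ?_ ?_
    · have hr : r (min n (-N - 1) - 1 + 1) = 0 := by
          apply hN
          rcases le_or_gt 0 (min n (-N - 1) - 1 + 1) with hle | hlt
          · rw [abs_of_nonneg hle]; omega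
          · rw [abs_of_neg hlt]; omega
      refine ⟨0, 0, ?_⟩
      ext i j
      exact absurd i.isLt (by omega)
    · intro m hm ih
      obtain ⟨g, g', hgg⟩ := ih
      -- P : square matrix of size r (m+1+1), each column is a cycle
      set P : Matrix (Fin (r (m + 1 + 1))) (Fin (r (m + 1 + 1))) R :=
        1 - g' * d (m + 1) with hP
      have hdP : d (m + 1) * P = 0 := by
        have h1 : d (m + 1) * g' = 1 - g * d m := by
          have := hgg
          rw [eq_sub_iff_add_eq]
          exact this
        rw [hP, Matrix.mul_sub, Matrix.mul_one, ← Matrix.mul_assoc, h1,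
          Matrix.sub_mul, Matrix.one_mul, Matrix.mul_assoc, hd m, Matrix.mul_zero]
        abel
      have hcol : ∀ j : Fin (r (m + 1 + 1)),
          (d (m + 1)).mulVec (fun i => P i j) = 0 := by
        intro j
        funext i
        have := congrFun (congrFun hdP i) j
        simpa [Matrix.mul_apply, Matrix.mulVec, dotProduct] using this
      choose W hW using fun j => hcon (m + 1) (fun i => P i j) (hcol j)
      refine ⟨g', Matrix.of (fun i j => W j i), ?_⟩
      have hWP : d (m + 1 + 1) * Matrix.of (fun i j => W j i) = P := by
        ext i j
        have := congrFun (hW j) i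
        simpa [Matrix.mul_apply, Matrix.mulVec, dotProduct] using this
      rw [hWP, hP]
      abel
  obtain ⟨g, g', hgg⟩ := key n (by omega)
  -- reduce the homotopy identity mod the maximal ideal
  have hmod : (d (n + 1)).map π * g'.map π + g.map π * (d n).map π = 1 := by
    have := congrArg (fun M => M.map π) hgg
    simpa [Matrix.map_add, Matrix.map_mul, Matrix.map_one π (map_zero π) (map_one π)]
      using this
  apply hnb ((g'.map π).mulVec v)
  have h1 : (d (n + 1)).map π * g'.map π = 1 - g.map π * (d n).map π := by
    rw [eq_sub_iff_add_eq]; exact hmod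
  calc ((d (n + 1)).map π).mulVec ((g'.map π).mulVec v)
      = ((d (n + 1)).map π * g'.map π).mulVec v := by
        rw [Matrix.mulVec_mulVec]
    _ = v := by
        rw [h1, Matrix.sub_mulVec, Matrix.one_mulVec, ← Matrix.mulVec_mulVec, hv,
          Matrix.mulVec_zero, sub_zero]
end

section
/- Let R → S be a flat homomorphism of commutative rings and M a finitely generated R-module. Then the annihilator of S ⊗_R M in S equals the ideal of S generated by the image of the annihilator of M in R. -/
/-!
Choosing generators `m₁, …, mₙ` of `M`, the annihilator of `M` is that of the single element
`(mᵢ)ᵢ` of `Mⁿ`, i.e. the kernel of `R → Mⁿ, r ↦ r • (mᵢ)ᵢ`; likewise the annihilator of `S ⊗ M` is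
that of `(1 ⊗ mᵢ)ᵢ ∈ (S ⊗ M)ⁿ ≅ S ⊗ Mⁿ`, the kernel of the base-changed map `S → S ⊗ Mⁿ`.
Flat base change preserves kernels, and the image of `S ⊗ I` in `S ⊗ R = S` is the extension `IS`.
-/

open TensorProduct

section

variable {R : Type*} [CommRing R]

theorem Module.annihilator_eq_annihilator_span_singleton_pi {M ι : Type*} [AddCommGroup M]
    [Module R M] {m : ι → M} (hm : Submodule.span R (Set.range m) = ⊤) :
    Module.annihilator R M = (R ∙ m).annihilator := by
  ext r
  rw [Submodule.mem_annihilator_span_singleton, ← Submodule.annihilator_top, ← hm,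
    Submodule.mem_annihilator_span, funext_iff]
  simp

theorem LinearEquiv.annihilator_span_singleton_apply {M N : Type*} [AddCommGroup M]
    [Module R M] [AddCommGroup N] [Module R N] (e : M ≃ₗ[R] N) (x : M) :
    (R ∙ e x).annihilator = (R ∙ x).annihilator := by
  ext r
  simp only [Submodule.mem_annihilator_span_singleton, ← map_smul, e.map_eq_zero_iff]

variable (S : Type*) [CommRing S] [Algebra R S]

theorem Ideal.map_algebraMap_eq_range_rid_lTensor (I : Ideal R) :
    I.map (algebraMap R S) = LinearMap.range ((AlgebraTensorModule.rid R S S).toLinearMap ∘ₗ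
      AlgebraTensorModule.lTensor S S I.subtype) := by
  rw [LinearMap.range_comp]
  change _ = (I.baseChange S).map _
  rw [← Submodule.span_eq I, Submodule.baseChange_span, Submodule.map_span, Set.image_image]
  simp [Ideal.map, Algebra.algebraMap_eq_smul_one]

theorem Submodule.annihilator_span_singleton_one_tmul [Module.Flat R S] {N : Type*}
    [AddCommGroup N] [Module R N] (n : N) :
    (S ∙ (1 : S) ⊗ₜ[R] n).annihilator = (R ∙ n).annihilator.map (algebraMap R S) := by
  have hfactor : LinearMap.toSpanSingleton S _ ((1 : S) ⊗ₜ[R] n) =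
      AlgebraTensorModule.lTensor S S (LinearMap.toSpanSingleton R N n) ∘ₗ
        (AlgebraTensorModule.rid R S S).symm.toLinearMap := by
    ext; simp
  rw [annihilator_span_singleton, annihilator_span_singleton, hfactor, LinearMap.ker_comp,
    Module.Flat.ker_lTensor_eq, Submodule.comap_equiv_eq_map_symm, LinearEquiv.symm_symm,
    ← LinearMap.range_comp, Ideal.map_algebraMap_eq_range_rid_lTensor]

end

/-- For a flat homomorphism `R → S` of commutative rings and a finitely generated
`R`-module `M`, the annihilator of `S ⊗[R] M` in `S` is the ideal of `S` generated by
the image of the annihilator of `M`. -/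
theorem stmt_3 (R S : Type) [CommRing R] [CommRing S] [Algebra R S] [Module.Flat R S]
    (M : Type) [AddCommGroup M] [Module R M] [Module.Finite R M] :
    Module.annihilator S (S ⊗[R] M) = (Module.annihilator R M).map (algebraMap R S) := by
  obtain ⟨n, m, hm⟩ := Module.Finite.exists_fin (R := R) (M := M)
  have hspan : Submodule.span S (Set.range fun i ↦ (1 : S) ⊗ₜ[R] m i) = ⊤ := by
    have h := Submodule.baseChange_span (R := R) S (Set.range m)
    rwa [hm, Submodule.baseChange_top, ← Set.range_comp, eq_comm] at h
  calc Module.annihilator S (S ⊗[R] M)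
      = (S ∙ fun i ↦ (1 : S) ⊗ₜ[R] m i).annihilator :=
        Module.annihilator_eq_annihilator_span_singleton_pi hspan
    _ = (S ∙ (1 : S) ⊗ₜ[R] m).annihilator := by
        rw [← (piRight R S S fun _ ↦ M).symm.annihilator_span_singleton_apply, piRight_symm_apply]
    _ = (Module.annihilator R M).map (algebraMap R S) := by
        rw [Submodule.annihilator_span_singleton_one_tmul,
          Module.annihilator_eq_annihilator_span_singleton_pi hm]
end

section
/- Let M be an n×n matrix with nonnegative real entries such that M^k has all entries strictly positive for some k ≥ 1. Then M has a real eigenvalue λ > 0 admitting an eigenvector all of whose entries are strictly positive. -/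
open Finset

private lemma pf_mulVec_pos {n : ℕ} (A : Matrix (Fin n) (Fin n) ℝ)
    (hA : ∀ i j, 0 < A i j) (v : Fin n → ℝ) (hv : ∀ j, 0 ≤ v j)
    (j₀ : Fin n) (hj₀ : 0 < v j₀) (i : Fin n) : 0 < A.mulVec v i := by
  rw [Matrix.mulVec, dotProduct]
  exact Finset.sum_pos' (fun j _ => mul_nonneg (hA i j).le (hv j))
    ⟨j₀, Finset.mem_univ _, mul_pos (hA i j₀) hj₀⟩

private lemma pf_continuous_mulVec {n : ℕ} (A : Matrix (Fin n) (Fin n) ℝ) :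
    Continuous fun v : Fin n → ℝ => A.mulVec v :=
  (LinearMap.continuous_of_finiteDimensional A.mulVecLin).congr fun v => A.mulVecLin_apply v

/-- A Perron–Frobenius (primitive) matrix — a square matrix with nonnegative real entries some
power of which has all entries strictly positive — has a positive real eigenvalue admitting an
eigenvector with strictly positive entries. -/
theorem stmt_15 (n : ℕ) (M : Matrix (Fin n) (Fin n) ℝ)
    (hM : ∀ i j, 0 ≤ M i j)
    (hprim : ∃ k : ℕ, 1 ≤ k ∧ ∀ i j, 0 < (M ^ k) i j) :
    ∃ (lam : ℝ) (v : Fin n → ℝ), 0 < lam ∧ (∀ i, 0 < v i) ∧ M.mulVec v = lam • v := by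
  obtain ⟨k, hk1, hkpos⟩ := hprim
  rcases Nat.eq_zero_or_pos n with hn | hn
  · subst hn
    exact ⟨1, fun _ => 1, one_pos, fun i => i.elim0, funext fun i => i.elim0⟩
  haveI : Nonempty (Fin n) := ⟨⟨0, hn⟩⟩
  obtain ⟨m, rfl⟩ : ∃ m, k = m + 1 := ⟨k - 1, by omega⟩
  set N := M ^ (m + 1) with hNdef
  -- every row of M has a positive entry
  have hrow : ∀ i, ∃ l, 0 < M i l := by
    intro i
    by_contra h
    push_neg at h
    have hz : ∀ l, M i l = 0 := fun l => le_antisymm (h l) (hM i l)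
    have h0 : N i i = 0 := by
      rw [hNdef, pow_succ' M m, Matrix.mul_apply]
      exact Finset.sum_eq_zero fun l _ => by rw [hz l, zero_mul]
    exact (hkpos i i).ne' h0
  -- M applied to a positive vector is positive in each coordinate
  have hMposvec : ∀ (v : Fin n → ℝ), (∀ j, 0 < v j) → ∀ i, 0 < M.mulVec v i := by
    intro v hv i
    obtain ⟨l, hl⟩ := hrow i
    rw [Matrix.mulVec, dotProduct]
    exact Finset.sum_pos' (fun j _ => mul_nonneg (hM i j) (hv j).le)
      ⟨l, Finset.mem_univ _, mul_pos hl (hv l)⟩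
  -- N applied to a member of the simplex is positive
  have hNC : ∀ v ∈ ({v | (∀ j, 0 ≤ v j) ∧ ∑ j, v j = 1} : Set (Fin n → ℝ)),
      ∀ i, 0 < N.mulVec v i := by
    rintro v ⟨hv0, hv1⟩ i
    have : ∃ j ∈ Finset.univ, (0 : ℝ) < v j := by
      have h01 : (∑ j : Fin n, (0:ℝ)) < ∑ j, v j := by
        rw [hv1]; simp
      obtain ⟨j, hj, hj'⟩ := Finset.exists_lt_of_sum_lt h01
      exact ⟨j, hj, hj'⟩
    obtain ⟨j₀, -, hj₀⟩ := this
    exact pf_mulVec_pos N hkpos v hv0 j₀ hj₀ i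
  -- the simplex
  set C : Set (Fin n → ℝ) := {v | (∀ j, 0 ≤ v j) ∧ ∑ j, v j = 1} with hCdef
  have hCclosed : IsClosed C := by
    have h1 : IsClosed {v : Fin n → ℝ | ∀ j, 0 ≤ v j} := by
      have he : {v : Fin n → ℝ | ∀ j, 0 ≤ v j} = ⋂ j, {v : Fin n → ℝ | 0 ≤ v j} := by
        ext v; simp [Set.mem_iInter]
      rw [he]
      exact isClosed_iInter fun j => isClosed_le continuous_const (continuous_apply j)
    have h2 : IsClosed {v : Fin n → ℝ | ∑ j, v j = 1} :=
      isClosed_eq (continuous_finset_sum _ fun j _ => continuous_apply j) continuous_const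
    exact h1.inter h2
  have hCcompact : IsCompact C := by
    refine IsCompact.of_isClosed_subset (isCompact_Icc (a := (0 : Fin n → ℝ)) (b := 1))
      hCclosed ?_
    rintro v ⟨hv0, hv1⟩
    constructor
    · intro j; exact hv0 j
    · intro j
      have := Finset.single_le_sum (f := v) (fun l _ => hv0 l) (Finset.mem_univ j)
      rw [hv1] at this
      exact this
  -- upper bound
  set B : ℝ := ∑ i, ∑ j, M i j with hBdef
  have hBrow : ∀ i, ∑ j, M i j ≤ B := by
    intro i
    exact Finset.single_le_sum (f := fun i => ∑ j, M i j)
      (fun l _ => Finset.sum_nonneg fun j _ => hM l j) (Finset.mem_univ i)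
  have hbound : ∀ (lam : ℝ) (w : Fin n → ℝ), 0 ≤ lam → (∀ i, 0 < w i) →
      (∀ i, lam * w i ≤ M.mulVec w i) → lam ≤ B := by
    intro lam w hlam hw hcon
    obtain ⟨i, -, hi⟩ := Finset.exists_max_image Finset.univ w Finset.univ_nonempty
    have h1 : lam * w i ≤ B * w i := by
      calc lam * w i ≤ M.mulVec w i := hcon i
        _ = ∑ j, M i j * w j := by rw [Matrix.mulVec, dotProduct]
        _ ≤ ∑ j, M i j * w i :=
            Finset.sum_le_sum fun j _ => mul_le_mul_of_nonneg_left (hi j (Finset.mem_univ j)) (hM i j)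
        _ = (∑ j, M i j) * w i := by rw [Finset.sum_mul]
        _ ≤ B * w i := mul_le_mul_of_nonneg_right (hBrow i) (hw i).le
    exact le_of_mul_le_mul_right h1 (hw i)
  -- the compact constraint set
  set K : Set (ℝ × (Fin n → ℝ)) :=
    {p | p.1 ∈ Set.Icc (0:ℝ) B ∧ p.2 ∈ C ∧
      ∀ i, p.1 * N.mulVec p.2 i ≤ M.mulVec (N.mulVec p.2) i} with hKdef
  have hKclosed : IsClosed K := by
    have h1 : IsClosed {p : ℝ × (Fin n → ℝ) | p.1 ∈ Set.Icc (0:ℝ) B} :=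
      isClosed_Icc.preimage continuous_fst
    have h2 : IsClosed {p : ℝ × (Fin n → ℝ) | p.2 ∈ C} := hCclosed.preimage continuous_snd
    have h3 : IsClosed {p : ℝ × (Fin n → ℝ) |
        ∀ i, p.1 * N.mulVec p.2 i ≤ M.mulVec (N.mulVec p.2) i} := by
      have he : {p : ℝ × (Fin n → ℝ) | ∀ i, p.1 * N.mulVec p.2 i ≤ M.mulVec (N.mulVec p.2) i}
          = ⋂ i, {p : ℝ × (Fin n → ℝ) | p.1 * N.mulVec p.2 i ≤ M.mulVec (N.mulVec p.2) i} := by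
        ext p; simp [Set.mem_iInter]
      rw [he]
      refine isClosed_iInter fun i => isClosed_le ?_ ?_
      · exact continuous_fst.mul
          ((continuous_apply i).comp ((pf_continuous_mulVec N).comp continuous_snd))
      · exact (continuous_apply i).comp
          ((pf_continuous_mulVec M).comp ((pf_continuous_mulVec N).comp continuous_snd))
    exact h1.inter (h2.inter h3)
  have hKcompact : IsCompact K := by
    refine IsCompact.of_isClosed_subset ((isCompact_Icc (a := (0:ℝ)) (b := B)).prod hCcompact) hKclosed ?_
    rintro p ⟨h1, h2, -⟩
    exact ⟨h1, h2⟩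
  -- nonemptiness with positive first coordinate
  set v₀ : Fin n → ℝ := fun _ => (n : ℝ)⁻¹ with hv₀def
  have hv₀C : v₀ ∈ C := by
    constructor
    · intro j; positivity
    · simp [hv₀def, Finset.sum_const, Finset.card_univ]
      field_simp
  have hw₀ : ∀ i, 0 < N.mulVec v₀ i := hNC v₀ hv₀C
  have hMw₀ : ∀ i, 0 < M.mulVec (N.mulVec v₀) i := hMposvec _ hw₀
  set lam₀ : ℝ :=
    Finset.univ.inf' Finset.univ_nonempty
      (fun i => M.mulVec (N.mulVec v₀) i / N.mulVec v₀ i) with hlam₀def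
  have hlam₀pos : 0 < lam₀ := by
    rw [hlam₀def, Finset.lt_inf'_iff]
    intro i _
    exact div_pos (hMw₀ i) (hw₀ i)
  have hlam₀con : ∀ i, lam₀ * N.mulVec v₀ i ≤ M.mulVec (N.mulVec v₀) i := by
    intro i
    have h1 : lam₀ ≤ M.mulVec (N.mulVec v₀) i / N.mulVec v₀ i :=
      Finset.inf'_le _ (Finset.mem_univ i)
    calc lam₀ * N.mulVec v₀ i ≤ (M.mulVec (N.mulVec v₀) i / N.mulVec v₀ i) * N.mulVec v₀ i :=
          mul_le_mul_of_nonneg_right h1 (hw₀ i).le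
      _ = M.mulVec (N.mulVec v₀) i := div_mul_cancel₀ _ (hw₀ i).ne'
  have hK0 : (lam₀, v₀) ∈ K :=
    ⟨⟨hlam₀pos.le, hbound lam₀ _ hlam₀pos.le hw₀ hlam₀con⟩, hv₀C, hlam₀con⟩
  -- maximize the first coordinate over K
  obtain ⟨p, hpK, hpmax⟩ := hKcompact.exists_isMaxOn ⟨(lam₀, v₀), hK0⟩
    continuous_fst.continuousOn
  obtain ⟨⟨hplam0, hplamB⟩, hpvC, hpcon⟩ := hpK
  set lam : ℝ := p.1 with hlamdef
  set w : Fin n → ℝ := N.mulVec p.2 with hwdef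
  have hlampos : 0 < lam := lt_of_lt_of_le hlam₀pos (hpmax hK0)
  have hwpos : ∀ i, 0 < w i := hNC p.2 hpvC
  -- show equality M w = lam • w
  have heq : ∀ i, M.mulVec w i = lam * w i := by
    by_contra h
    push_neg at h
    obtain ⟨i₀, hi₀⟩ := h
    have hi₀' : lam * w i₀ < M.mulVec w i₀ := lt_of_le_of_ne (hpcon i₀) (Ne.symm hi₀)
    set z : Fin n → ℝ := M.mulVec w - lam • w with hzdef
    have hz0 : ∀ j, 0 ≤ z j := by
      intro j
      have := hpcon j
      simp only [hzdef, Pi.sub_apply, Pi.smul_apply, smul_eq_mul]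
      linarith
    have hzi₀ : 0 < z i₀ := by
      simp only [hzdef, Pi.sub_apply, Pi.smul_apply, smul_eq_mul]
      linarith
    set u : Fin n → ℝ := N.mulVec w with hudef
    have hupos : ∀ i, 0 < u i :=
      fun i => pf_mulVec_pos N hkpos w (fun j => (hwpos j).le) i₀ (hwpos i₀) i
    have hcomm : N * M = M * N := ((Commute.refl M).pow_left (m + 1)).eq
    have hNz : N.mulVec z = M.mulVec u - lam • u := by
      rw [hzdef, Matrix.mulVec_sub, Matrix.mulVec_smul, hudef,
        Matrix.mulVec_mulVec, hcomm, ← Matrix.mulVec_mulVec]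
    have hkey : ∀ i, lam * u i < M.mulVec u i := by
      intro i
      have := pf_mulVec_pos N hkpos z hz0 i₀ hzi₀ i
      rw [hNz] at this
      simp only [Pi.sub_apply, Pi.smul_apply, smul_eq_mul] at this
      linarith
    -- now strictly improve: apply N once more
    set y : Fin n → ℝ := M.mulVec u - lam • u with hydef
    have hy0 : ∀ j, 0 ≤ y j := by
      intro j
      simp only [hydef, Pi.sub_apply, Pi.smul_apply, smul_eq_mul]
      linarith [hkey j]
    have hyi : 0 < y i₀ := by
      simp only [hydef, Pi.sub_apply, Pi.smul_apply, smul_eq_mul]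
      linarith [hkey i₀]
    have hNy : N.mulVec y = M.mulVec (N.mulVec u) - lam • N.mulVec u := by
      rw [hydef, Matrix.mulVec_sub, Matrix.mulVec_smul,
        Matrix.mulVec_mulVec, hcomm, ← Matrix.mulVec_mulVec]
    have hkey2 : ∀ i, lam * N.mulVec u i < M.mulVec (N.mulVec u) i := by
      intro i
      have := pf_mulVec_pos N hkpos y hy0 i₀ hyi i
      rw [hNy] at this
      simp only [Pi.sub_apply, Pi.smul_apply, smul_eq_mul] at this
      linarith
    -- rescale u into the simplex
    set s : ℝ := ∑ i, u i with hsdef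
    have hs : 0 < s := Finset.sum_pos (fun i _ => hupos i) Finset.univ_nonempty
    set v' : Fin n → ℝ := s⁻¹ • u with hv'def
    have hv'C : v' ∈ C := by
      constructor
      · intro j
        simp only [hv'def, Pi.smul_apply, smul_eq_mul]
        exact mul_nonneg (inv_nonneg.mpr hs.le) (hupos j).le
      · simp only [hv'def, Pi.smul_apply, smul_eq_mul, ← Finset.mul_sum, ← hsdef]
        exact inv_mul_cancel₀ hs.ne'
    have hNv' : N.mulVec v' = s⁻¹ • N.mulVec u := by
      rw [hv'def, Matrix.mulVec_smul]
    have hMNv' : M.mulVec (N.mulVec v') = s⁻¹ • M.mulVec (N.mulVec u) := by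
      rw [hNv', Matrix.mulVec_smul]
    have hw'pos : ∀ i, 0 < N.mulVec v' i := hNC v' hv'C
    have hkey3 : ∀ i, lam * N.mulVec v' i < M.mulVec (N.mulVec v') i := by
      intro i
      rw [hMNv', hNv']
      simp only [Pi.smul_apply, smul_eq_mul]
      have := hkey2 i
      have hsi : (0:ℝ) < s⁻¹ := inv_pos.mpr hs
      nlinarith [hkey2 i]
    set lam' : ℝ :=
      Finset.univ.inf' Finset.univ_nonempty
        (fun i => M.mulVec (N.mulVec v') i / N.mulVec v' i) with hlam'def
    have hlam'gt : lam < lam' := by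
      rw [hlam'def, Finset.lt_inf'_iff]
      intro i _
      exact (lt_div_iff₀ (hw'pos i)).2 (hkey3 i)
    have hlam'con : ∀ i, lam' * N.mulVec v' i ≤ M.mulVec (N.mulVec v') i := by
      intro i
      have h1 : lam' ≤ M.mulVec (N.mulVec v') i / N.mulVec v' i :=
        Finset.inf'_le _ (Finset.mem_univ i)
      calc lam' * N.mulVec v' i ≤ (M.mulVec (N.mulVec v') i / N.mulVec v' i) * N.mulVec v' i :=
            mul_le_mul_of_nonneg_right h1 (hw'pos i).le
        _ = M.mulVec (N.mulVec v') i := div_mul_cancel₀ _ (hw'pos i).ne'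
    have hlam'pos : 0 < lam' := lt_trans hlampos hlam'gt
    have hK' : (lam', v') ∈ K :=
      ⟨⟨hlam'pos.le, hbound lam' _ hlam'pos.le hw'pos hlam'con⟩, hv'C, hlam'con⟩
    have := hpmax hK'
    exact absurd this (not_le.mpr hlam'gt)
  exact ⟨lam, w, hlampos, hwpos, funext fun i => by
    rw [heq i]; simp [Pi.smul_apply, smul_eq_mul]⟩
end
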